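/- arXiv:2307.05549 — 3 statements merged into one kernel-verified Lean document; each statement's English description precedes it below -/
import Mathlib

section
/- If f and g are entire functions on ℂ satisfying f(z)^2 + g(z)^2 = 1 for all z, then there exists an entire function h such that f = cos ∘ h and g = sin ∘ h. -/
/-!
`u = f + i g` is entire and nonvanishing, since `(f + i g)(f - i g) = f² + g² = 1`. The logarithmic
derivative `u'/u` is entire and hence has an entire primitive, which gives an entire logarithm
`φ` of `u`. For `h = -iφ` we get `exp (i h) = f + i g` and `exp (-i h) = f - i g`, and the
formulas for `cos` and `sin` in terms of `exp` finish the proof.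
-/

open Complex

theorem Complex.exists_differentiable_exp_eq_of_ne_zero {u : ℂ → ℂ} (hu : Differentiable ℂ u)
    (hu0 : ∀ z, u z ≠ 0) : ∃ φ : ℂ → ℂ, Differentiable ℂ φ ∧ ∀ z, exp (φ z) = u z := by
  obtain ⟨φ, hφ0, hφ⟩ :=
    (hu.deriv.div hu hu0).isExactOn_univ.with_val_at 0 (log (u 0))
  have hφ' : ∀ z, HasDerivAt φ (deriv u z / u z) z := fun z => hφ z (Set.mem_univ z)
  have hφd : Differentiable ℂ φ := fun z => (hφ' z).differentiableAt
  refine ⟨φ, hφd, fun z => ?_⟩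
  -- `u · exp (-φ)` has derivative `u' e^{-φ} - u e^{-φ} u'/u = 0`, so it is constant, equal to 1.
  have hV : ∀ z, HasDerivAt (fun w => u w * exp (-φ w)) 0 z := fun z => by
    refine ((hu z).hasDerivAt.mul (hφ' z).neg.cexp).congr_deriv ?_
    rw [mul_comm (exp _), ← mul_assoc, mul_neg, mul_div_cancel₀ _ (hu0 z)]
    ring
  have hconst : u z * exp (-φ z) = u 0 * exp (-φ 0) :=
    is_const_of_deriv_eq_zero (fun z => (hV z).differentiableAt) (fun z => (hV z).deriv) z 0
  simp only [hφ0, exp_neg, exp_log (hu0 0), mul_inv_cancel₀ (hu0 0)] at hconst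
  exact ((mul_inv_eq_one₀ (exp_ne_zero _)).1 hconst).symm

theorem Complex.cos_eq_and_sin_eq_of_exp_mul_I_eq {w a b : ℂ} (hab : a ^ 2 + b ^ 2 = 1)
    (hw : exp (w * I) = a + b * I) : cos w = a ∧ sin w = b := by
  have hconj : exp (-w * I) = a - b * I := by
    rw [neg_mul, exp_neg, hw, inv_eq_of_mul_eq_one_right]
    linear_combination hab - b ^ 2 * I_sq
  have hplus := (cos_add_sin_I w).trans hw
  have hminus := (cos_sub_sin_I w).trans hconj
  refine ⟨by linear_combination (hplus + hminus) / 2, ?_⟩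
  exact mul_right_cancel₀ I_ne_zero (by linear_combination (hplus - hminus) / 2)

theorem stmt_0 (f g : ℂ → ℂ) (hf : Differentiable ℂ f) (hg : Differentiable ℂ g)
    (h : ∀ z : ℂ, f z ^ 2 + g z ^ 2 = 1) :
    ∃ h : ℂ → ℂ, Differentiable ℂ h ∧ f = Complex.cos ∘ h ∧ g = Complex.sin ∘ h := by
  have hu0 : ∀ z, f z + g z * I ≠ 0 := fun z hz => by
    have : (f z + g z * I) * (f z - g z * I) = 1 := by
      linear_combination h z - g z ^ 2 * I_sq
    simp [hz] at this
  obtain ⟨φ, hφd, hφ⟩ := exists_differentiable_exp_eq_of_ne_zero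
    (u := fun z => f z + g z * I) (hf.add (hg.mul_const I)) hu0
  have hcs : ∀ z, cos (-I * φ z) = f z ∧ sin (-I * φ z) = g z := fun z =>
    cos_eq_and_sin_eq_of_exp_mul_I_eq (h z) <| by
      rw [← hφ z]
      congr 1
      linear_combination -φ z * I_sq
  refine ⟨fun z => -I * φ z, hφd.const_mul _, ?_, ?_⟩
  · exact funext fun z => (hcs z).1.symm
  · exact funext fun z => (hcs z).2.symm
end

section
/- Let c ∈ ℂⁿ, let L : ℂⁿ → ℂ be linear, H : ℂⁿ → ℂ satisfy H(z+c) = H(z), and D₁, D₂, ω₁, ω₂, γ₁, γ₂, √a, √b ∈ ℂ with √a ≠ 0, ω₁ ≠ ω₂, ω₁·ω₂ = 1. Define h₁(z) = L₁(z) + H₁(z) + D₁ and h₂(z) = L₂(z) + H₂(z) + D₂ with L₁, L₂ linear and H₁, H₂ c-periodic, and f(z) = (ω₂·e^{h₁(z)} - ω₁·e^{h₂(z)})/(√a·(ω₂-ω₁)). If -(ω₂γ₂√b - √a)/(ω₂γ₁√b)·e^{-L₁(c)} = 1 and -(ω₁γ₂√b - √a)/(ω₁γ₁√b)·e^{-L₂(c)}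 = 1, then γ₁·f(z+c) + γ₂·f(z) = (e^{h₁(z)} - e^{h₂(z)})/(√b·(ω₂-ω₁)) for all z ∈ ℂⁿ. -/
/-!
Since `L` is additive and `H` is `c`-periodic, `exp (h (z + c)) = exp (h z) * exp (L c)`, so the shift
multiplies the two exponential terms of `f` by `exp (L₁ c)` and `exp (L₂ c)`. The two hypotheses on
`L₁ c` and `L₂ c` say exactly that `sb * ωⱼ * (γ₁ * exp (Lⱼ c) + γ₂) = sa`, which turns
`γ₁ f(z + c) + γ₂ f(z)` into the claimed combination.
-/

open Complex

theorem exp_add_period {E : Type*} [AddCommGroup E] [Module ℂ E] (L : E →ₗ[ℂ] ℂ) {H h : E → ℂ}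
    {c : E} {D : ℂ} (hH : ∀ z, H (z + c) = H z) (hh : ∀ z, h z = L z + H z + D) (z : E) :
    exp (h (z + c)) = exp (h z) * exp (L c) := by
  rw [← exp_add, hh, hh, map_add, hH]
  ring_nf

theorem mul_mul_add_eq_of_neg_div_mul_exp_neg_eq_one {sa sb ω γ₁ γ₂ ℓ : ℂ}
    (hc : -((ω * γ₂ * sb - sa) / (ω * γ₁ * sb)) * exp (-ℓ) = 1) :
    sb * ω * (γ₁ * exp ℓ + γ₂) = sa := by
  obtain ⟨⟨hω, hγ₁⟩, hsb⟩ : (ω ≠ 0 ∧ γ₁ ≠ 0) ∧ sb ≠ 0 := by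
    rw [← mul_ne_zero_iff, ← mul_ne_zero_iff]
    rintro h
    simp [h] at hc
  rw [exp_neg, mul_inv_eq_one₀ (exp_ne_zero ℓ)] at hc
  rw [← hc]
  field_simp
  ring

theorem stmt_13_general (n : ℕ) (c : Fin n → ℂ)
    (sa sb γ₁ γ₂ ω₁ ω₂ D₁ D₂ : ℂ)
    (hsa0 : sa ≠ 0) (hsb0 : sb ≠ 0)
    (hω : ω₁ ≠ ω₂)
    (L₁ L₂ : (Fin n → ℂ) →ₗ[ℂ] ℂ) (H₁ H₂ : (Fin n → ℂ) → ℂ)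
    (hH₁ : ∀ z, H₁ (z + c) = H₁ z) (hH₂ : ∀ z, H₂ (z + c) = H₂ z)
    (h₁ h₂ : (Fin n → ℂ) → ℂ)
    (hh₁ : ∀ z, h₁ z = L₁ z + H₁ z + D₁) (hh₂ : ∀ z, h₂ z = L₂ z + H₂ z + D₂)
    (f : (Fin n → ℂ) → ℂ)
    (hf : ∀ z, f z = (ω₂ * Complex.exp (h₁ z) - ω₁ * Complex.exp (h₂ z)) / (sa * (ω₂ - ω₁)))
    (hc₁ : -((ω₂ * γ₂ * sb - sa) / (ω₂ * γ₁ * sb)) * Complex.exp (-(L₁ c)) = 1)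
    (hc₂ : -((ω₁ * γ₂ * sb - sa) / (ω₁ * γ₁ * sb)) * Complex.exp (-(L₂ c)) = 1) :
    ∀ z : Fin n → ℂ, γ₁ * f (z + c) + γ₂ * f z =
      (Complex.exp (h₁ z) - Complex.exp (h₂ z)) / (sb * (ω₂ - ω₁)) := by
  intro z
  have hωd : ω₂ - ω₁ ≠ 0 := sub_ne_zero.mpr hω.symm
  have k₁ := mul_mul_add_eq_of_neg_div_mul_exp_neg_eq_one hc₁
  have k₂ := mul_mul_add_eq_of_neg_div_mul_exp_neg_eq_one hc₂
  rw [hf, hf, exp_add_period L₁ hH₁ hh₁, exp_add_period L₂ hH₂ hh₂]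
  field_simp
  linear_combination exp (h₁ z) * k₁ - exp (h₂ z) * k₂

theorem stmt_13 (n : ℕ) (hn : 1 ≤ n) (c : Fin n → ℂ)
    (sa sb γ₁ γ₂ ω₁ ω₂ D₁ D₂ : ℂ)
    (hsa0 : sa ≠ 0) (hsb0 : sb ≠ 0) (hγ₁ : γ₁ ≠ 0)
    (hω : ω₁ ≠ ω₂) (hprod : ω₁ * ω₂ = 1)
    (L₁ L₂ : (Fin n → ℂ) →ₗ[ℂ] ℂ) (H₁ H₂ : (Fin n → ℂ) → ℂ)
    (hH₁ : ∀ z, H₁ (z + c) = H₁ z) (hH₂ : ∀ z, H₂ (z + c) = H₂ z)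
    (h₁ h₂ : (Fin n → ℂ) → ℂ)
    (hh₁ : ∀ z, h₁ z = L₁ z + H₁ z + D₁) (hh₂ : ∀ z, h₂ z = L₂ z + H₂ z + D₂)
    (f : (Fin n → ℂ) → ℂ)
    (hf : ∀ z, f z = (ω₂ * Complex.exp (h₁ z) - ω₁ * Complex.exp (h₂ z)) / (sa * (ω₂ - ω₁)))
    (hc₁ : -((ω₂ * γ₂ * sb - sa) / (ω₂ * γ₁ * sb)) * Complex.exp (-(L₁ c)) = 1)
    (hc₂ : -((ω₁ * γ₂ * sb - sa) / (ω₁ * γ₁ * sb)) * Complex.exp (-(L₂ c)) = 1) :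
    ∀ z : Fin n → ℂ, γ₁ * f (z + c) + γ₂ * f z =
      (Complex.exp (h₁ z) - Complex.exp (h₂ z)) / (sb * (ω₂ - ω₁)) :=
  stmt_13_general n c sa sb γ₁ γ₂ ω₁ ω₂ D₁ D₂ hsa0 hsb0 hω L₁ L₂ H₁ H₂ hH₁ hH₂ h₁ h₂ hh₁ hh₂ f hf
    hc₁ hc₂
end

section
/- Let ξ ∈ ℂ be nonzero and a, b, γ₁, γ₂, A ∈ ℂ with √a, √b, γ₁ ≠ 0 and i·γ₁·√b·(ξ²+1) ≠ 0. Let g : ℂⁿ → ℂ satisfy g(z+c) - g(z) = L(c) for a linear L with e^{L(c)/2} = (√a(ξ²-1) - iγ₂√b(ξ²+1))/(iγ₁√b(ξ²+1)) (for a fixed square-root choice e^{g(z)/2} with (e^{g(z)/2})² = e^{g(z)} and e^{g(z+c)/2} = e^{L(c)/2}·e^{g(z)/2}). Then f(z) = ((ξ²+1)/(2ξ√a))·e^{g(z)/2} satisfies a·f(z)² + b·(γ₁·f(z+c) + γ₂·f(z))² = e^{g(z)} for all z. -/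
theorem stmt_14 (n : ℕ) (c : Fin n → ℂ) (a b sa sb γ₁ γ₂ ξ μ : ℂ)
    (hsa : sa ^ 2 = a) (hsb : sb ^ 2 = b) (hsa0 : sa ≠ 0) (hsb0 : sb ≠ 0)
    (hξ : ξ ≠ 0) (hγ₁ : γ₁ ≠ 0) (hden : Complex.I * γ₁ * sb * (ξ ^ 2 + 1) ≠ 0)
    (hμ : μ = (sa * (ξ ^ 2 - 1) - Complex.I * γ₂ * sb * (ξ ^ 2 + 1)) /
      (Complex.I * γ₁ * sb * (ξ ^ 2 + 1)))
    (E : (Fin n → ℂ) → ℂ) (hE0 : ∀ z, E z ≠ 0) (hE : ∀ z, E (z + c) = μ * E z)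
    (f : (Fin n → ℂ) → ℂ)
    (hf : ∀ z, f z = ((ξ ^ 2 + 1) / (2 * ξ * sa)) * E z) :
    ∀ z : Fin n → ℂ,
      a * f z ^ 2 + b * (γ₁ * f (z + c) + γ₂ * f z) ^ 2 = E z ^ 2 := by
  intro z
  have hξ1 : ξ ^ 2 + 1 ≠ 0 := by
    intro h; apply hden; rw [h]; ring
  have hI : Complex.I ^ 2 = -1 := Complex.I_sq
  have hI0 : Complex.I ≠ 0 := Complex.I_ne_zero
  have h1 : γ₁ * μ + γ₂ = sa * (ξ ^ 2 - 1) / (Complex.I * sb * (ξ ^ 2 + 1)) := by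
    rw [hμ]
    field_simp
    ring
  have h2 : (γ₁ * μ + γ₂) ^ 2 = -(sa ^ 2 * (ξ ^ 2 - 1) ^ 2) / (sb ^ 2 * (ξ ^ 2 + 1) ^ 2) := by
    rw [h1, div_pow, mul_pow, mul_pow, mul_pow, hI]
    field_simp
  have h3 : a * f z ^ 2 + b * (γ₁ * f (z + c) + γ₂ * f z) ^ 2 =
      sa ^ 2 * (((ξ ^ 2 + 1) / (2 * ξ * sa)) * E z) ^ 2 +
      sb ^ 2 * ((((ξ ^ 2 + 1) / (2 * ξ * sa)) * E z) ^ 2 * (γ₁ * μ + γ₂) ^ 2) := by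
    rw [hf, hf, hE, ← hsa, ← hsb]
    ring
  rw [h3, h2]
  have h2ξ : (2 : ℂ) * ξ * sa ≠ 0 := by simp [hξ, hsa0]
  have hd : sb ^ 2 * (ξ ^ 2 + 1) ^ 2 ≠ 0 := by simp [hsb0, hξ1]
  field_simp [h2ξ, hd]
  ring
end
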